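/- Let D_l, D_m, R_cl, R_cm ∈ ℝ^{2×2} be symmetric positive definite with R_cl − (1/4)(D_l^{-1} + D_m^{-1}) positive definite, and set R_2 = blockdiag(D_l, D_m) ∈ ℝ^{4×4} and Γ = [I_2; −I_2] ∈ ℝ^{4×2}. Then the 12×12 symmetric matrix S = [[0_{4×4}, 0_{4×4}, 0_{4×2}, 0_{4×2}], [0_{4×4}, −R_2, (1/2)Γ, 0_{4×2}], [0_{2×4}, (1/2)Γ^T, −R_cl, 0_{2×2}], [0_{2×4}, 0_{2×4}, 0_{2×2}, −R_cm]] is negative semidefinite, i.e., v^T S v ≤ 0 for all v ∈ ℝ^{12}. -/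

import Mathlib

open Matrix

noncomputable section

/-- `Γ = [I_2; −I_2] ∈ ℝ^{4×2}`. -/
def Gam : Matrix (Fin 2 ⊕ Fin 2) (Fin 2) ℝ :=
  Matrix.fromRows (1 : Matrix (Fin 2) (Fin 2) ℝ) (-1 : Matrix (Fin 2) (Fin 2) ℝ)

/-- The symmetric part `S` of the closed-loop matrix `F_ζ`, with blocks of sizes
4 (positions), 4 (momenta), 2 (`x_cl`), 2 (`x_cm`):
`S = [[0,0,0,0],[0,−R_2,(1/2)Γ,0],[0,(1/2)Γ^T,−R_cl,0],[0,0,0,−R_cm]]`. -/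
def Smat (Dl Dm Rcl Rcm : Matrix (Fin 2) (Fin 2) ℝ) :
    Matrix (((Fin 2 ⊕ Fin 2) ⊕ (Fin 2 ⊕ Fin 2)) ⊕ (Fin 2 ⊕ Fin 2))
           (((Fin 2 ⊕ Fin 2) ⊕ (Fin 2 ⊕ Fin 2)) ⊕ (Fin 2 ⊕ Fin 2)) ℝ :=
  Matrix.fromBlocks
    (Matrix.fromBlocks 0 0 0 (-(Matrix.fromBlocks Dl 0 0 Dm)))
    (Matrix.fromBlocks 0 0 ((1 / 2 : ℝ) • Gam) 0)
    (Matrix.fromBlocks 0 ((1 / 2 : ℝ) • Gamᵀ) 0 0)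
    (Matrix.fromBlocks (-Rcl) 0 0 (-Rcm))

lemma key_cross_bound (D : Matrix (Fin 2) (Fin 2) ℝ) (hD : D.PosDef) (a b : Fin 2 → ℝ) :
    a ⬝ᵥ b ≤ a ⬝ᵥ D.mulVec a + (1/4) * (b ⬝ᵥ D⁻¹.mulVec b) := by
  have hDi : D * D⁻¹ = 1 := mul_nonsing_inv D (isUnit_iff_ne_zero.mpr hD.det_pos.ne')
  have hsym : Dᵀ = D := hD.1
  have hsymi : D⁻¹ᵀ = D⁻¹ := by rw [transpose_nonsing_inv, hsym]
  have htr : ∀ y : Fin 2 → ℝ, (D⁻¹ *ᵥ b) ⬝ᵥ y = b ⬝ᵥ (D⁻¹ *ᵥ y) := by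
    intro y
    rw [dotProduct_comm, dotProduct_mulVec, ← mulVec_transpose, hsymi, dotProduct_comm]
  have h0 := hD.posSemidef.dotProduct_mulVec_nonneg (a - (1/2 : ℝ) • (D⁻¹ *ᵥ b))
  simp only [star_trivial, mulVec_sub, mulVec_smul, mulVec_mulVec, hDi, one_mulVec,
    dotProduct_sub, sub_dotProduct, dotProduct_smul, smul_dotProduct, smul_eq_mul] at h0
  rw [htr (D *ᵥ a), htr b] at h0
  have hcomm2 : b ⬝ᵥ D⁻¹ *ᵥ D *ᵥ a = a ⬝ᵥ b := by
    rw [mulVec_mulVec, nonsing_inv_mul D (isUnit_iff_ne_zero.mpr hD.det_pos.ne'), one_mulVec,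
      dotProduct_comm]
  rw [hcomm2] at h0
  linarith

/-- if `D_l, D_m, R_cl, R_cm` are symmetric positive definite and
`R_cl − (1/4)(D_l⁻¹ + D_m⁻¹)` is positive definite, then the 12×12 symmetric matrix
`S` (the symmetric part of `F_ζ`) is negative semidefinite. -/
theorem sym_Fzeta_negSemidef (Dl Dm Rcl Rcm : Matrix (Fin 2) (Fin 2) ℝ)
    (hDl : Dl.PosDef) (hDm : Dm.PosDef) (hRcl : Rcl.PosDef) (hRcm : Rcm.PosDef)
    (hSchur : (Rcl - (1 / 4 : ℝ) • (Dl⁻¹ + Dm⁻¹)).PosDef) :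
    ∀ v : ((Fin 2 ⊕ Fin 2) ⊕ (Fin 2 ⊕ Fin 2)) ⊕ (Fin 2 ⊕ Fin 2) → ℝ,
      v ⬝ᵥ (Smat Dl Dm Rcl Rcm).mulVec v ≤ 0 := by
  intro v
  have hv : v = Sum.elim (Sum.elim (Sum.elim (fun i => v (.inl (.inl (.inl i)))) (fun i => v (.inl (.inl (.inr i)))))
      (Sum.elim (fun i => v (.inl (.inr (.inl i)))) (fun i => v (.inl (.inr (.inr i))))))
      (Sum.elim (fun i => v (.inr (.inl i))) (fun i => v (.inr (.inr i)))) := by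
    funext i; rcases i with ((i|i)|(i|i))|(i|i) <;> rfl
  rw [hv]
  set q1 := fun i => v (.inl (.inl (.inl i)))
  set q2 := fun i => v (.inl (.inl (.inr i)))
  set pl := fun i => v (.inl (.inr (.inl i)))
  set pm := fun i => v (.inl (.inr (.inr i)))
  set xl := fun i => v (.inr (.inl i))
  set xm := fun i => v (.inr (.inr i))
  simp only [Smat, Gam, fromBlocks_mulVec, transpose_fromRows, fromCols_mulVec_sumElim,
    fromRows_mulVec, smul_mulVec, mulVec_zero, zero_mulVec, add_zero, zero_add,
    neg_mulVec, one_mulVec, transpose_one, transpose_neg, mulVec_neg,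
    sumElim_dotProduct_sumElim, dotProduct_neg, dotProduct_zero, zero_dotProduct,
    dotProduct_add, dotProduct_smul, smul_eq_mul, Sum.elim_comp_inl, Sum.elim_comp_inr]
  have h1 := key_cross_bound Dl hDl pl xl
  have h2 := key_cross_bound Dm hDm (-pm) xl
  simp only [neg_dotProduct, mulVec_neg, dotProduct_neg, neg_neg] at h2
  have h3 := hSchur.posSemidef.dotProduct_mulVec_nonneg xl
  have h4 := hRcm.posSemidef.dotProduct_mulVec_nonneg xm
  simp only [star_trivial, sub_mulVec, add_mulVec, smul_mulVec, dotProduct_sub,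
    dotProduct_add, dotProduct_smul, smul_eq_mul] at h3 h4
  have hc1 : xl ⬝ᵥ pl = pl ⬝ᵥ xl := dotProduct_comm _ _
  have hc2 : xl ⬝ᵥ pm = pm ⬝ᵥ xl := dotProduct_comm _ _
  linarith


end
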